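/- The Weyl algebra equals K ⊕ [W,W], where [W,W] is the span of all super-commutators [F,G] = F ⋆ G − (−1)^{fg} G ⋆ F; equivalently, [W,W] = ker(Str) = ⊕_{k≥1} S^k, the space of polynomials vanishing at 0. -/

import Mathlib

open MvPolynomial

noncomputable section

variable {K : Type*} [Field K] [CharZero K] {n : ℕ}

/-- Variable index set for `S = K[p₁,q₁,…,pₙ,qₙ]`: `inl i` is `pᵢ`, `inr i` is `qᵢ`. -/
abbrev Idx (n : ℕ) := Sum (Fin n) (Fin n)

/-- The variable `pᵢ`. -/
def pV (n : ℕ) (K : Type*) [Field K] (i : Fin n) : MvPolynomial (Idx n) K := X (Sum.inl i)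

/-- The variable `qᵢ`. -/
def qV (n : ℕ) (K : Type*) [Field K] (i : Fin n) : MvPolynomial (Idx n) K := X (Sum.inr i)

/-- Left factor of one summand of `℘^k (F ⊗ G)`: for each `j : Fin k` we chose
`(i, true)` (the term `∂/∂pᵢ ⊗ ∂/∂qᵢ`) or `(i, false)` (the term `∂/∂qᵢ ⊗ ∂/∂pᵢ`). -/
def derivsL {k : ℕ} (v : Fin k → Fin n × Bool) (F : MvPolynomial (Idx n) K) :
    MvPolynomial (Idx n) K :=
  (List.finRange k).foldl
    (fun F j => pderiv (if (v j).2 then Sum.inl (v j).1 else Sum.inr (v j).1) F) F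

/-- Right factor of one summand of `℘^k (F ⊗ G)`. -/
def derivsR {k : ℕ} (v : Fin k → Fin n × Bool) (G : MvPolynomial (Idx n) K) :
    MvPolynomial (Idx n) K :=
  (List.finRange k).foldl
    (fun G j => pderiv (if (v j).2 then Sum.inr (v j).1 else Sum.inl (v j).1) G) G

/-- Moyal coefficient `C_k(F,G) = (1/(2^k k!)) (m ∘ ℘^k)(F ⊗ G)`, with
`℘(F ⊗ G) = Σᵢ (∂F/∂pᵢ ⊗ ∂G/∂qᵢ − ∂F/∂qᵢ ⊗ ∂G/∂pᵢ)` expanded multinomially. -/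
def moyalC (k : ℕ) (F G : MvPolynomial (Idx n) K) : MvPolynomial (Idx n) K :=
  ((2 ^ k * Nat.factorial k : ℕ) : K)⁻¹ •
    ∑ v : Fin k → Fin n × Bool,
      (∏ j : Fin k, if (v j).2 then (1 : K) else -1) • (derivsL v F * derivsR v G)

/-- The Moyal star product at `t = 1`: `F ⋆ G = Σ_{k ≥ 0} C_k(F,G)`; the sum is finite
since `C_k(F,G) = 0` as soon as `k` exceeds the total degree of `F`. -/
def mstar (F G : MvPolynomial (Idx n) K) : MvPolynomial (Idx n) K :=
  ∑ k ∈ Finset.range (F.totalDegree + 1), moyalC k F G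

/-- The Poisson bracket `{F,G} = Σᵢ (∂F/∂pᵢ ∂G/∂qᵢ − ∂F/∂qᵢ ∂G/∂pᵢ)`. -/
def poisson (F G : MvPolynomial (Idx n) K) : MvPolynomial (Idx n) K :=
  ∑ i : Fin n,
    (pderiv (Sum.inl i) F * pderiv (Sum.inr i) G -
      pderiv (Sum.inr i) F * pderiv (Sum.inl i) G)

/-- The supertrace `Str F = F(0)`, evaluation at the origin. -/
def Str (F : MvPolynomial (Idx n) K) : K := eval (fun _ => 0) F

/-- The set of super-commutators `[F,G] = F ⋆ G − (−1)^{fg} G ⋆ F` of homogeneous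
elements. -/
def superBrackets (n : ℕ) (K : Type*) [Field K] [CharZero K] :
    Set (MvPolynomial (Idx n) K) :=
  {H | ∃ (F G : MvPolynomial (Idx n) K) (f g : ℕ), F.IsHomogeneous f ∧
    G.IsHomogeneous g ∧ H = mstar F G - ((-1 : K) ^ (f * g)) • mstar G F}

section Helpers

variable {K : Type*} [Field K] [CharZero K] {n : ℕ}

lemma degree_add' (a b : Idx n →₀ ℕ) : (a + b).degree = a.degree + b.degree := by
  simp [Finsupp.degree_eq_weight_one, map_add]

lemma degree_single' (s : Idx n) : (Finsupp.single s 1).degree = 1 := by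
  exact Finsupp.degree_single s 1

lemma foldl_pderiv_zero {α : Type*} (g : α → Idx n) (l : List α) :
    l.foldl (fun F j => pderiv (g j) F) (0 : MvPolynomial (Idx n) K) = 0 := by
  induction l with
  | nil => rfl
  | cons a l ih => simpa using ih

lemma pderiv_isHomogeneous {F : MvPolynomial (Idx n) K} {f : ℕ} (h : F.IsHomogeneous f)
    (i : Idx n) : (pderiv i F).IsHomogeneous (f - 1) := by
  nth_rewrite 1 [F.as_sum]
  rw [map_sum]
  apply IsHomogeneous.sum
  intro d hd
  rw [pderiv_monomial]
  rcases Nat.eq_zero_or_pos (d i) with h0 | h0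
  · simp [h0, isHomogeneous_zero]
  · apply isHomogeneous_monomial
    have hdeg : d.degree = f := by
      rw [Finsupp.degree_eq_weight_one]; exact h (mem_support_iff.mp hd)
    have hle : Finsupp.single i 1 ≤ d := Finsupp.single_le_iff.mpr h0
    have hca : d - Finsupp.single i 1 + Finsupp.single i 1 = d := tsub_add_cancel_of_le hle
    have h2 := degree_add' (d - Finsupp.single i 1) (Finsupp.single i 1)
    rw [hca, degree_single', hdeg] at h2
    omega

lemma pderiv_homog_zero {F : MvPolynomial (Idx n) K} (h : F.IsHomogeneous 0) (i : Idx n) :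
    pderiv i F = 0 := by
  nth_rewrite 1 [F.as_sum]
  rw [map_sum]
  apply Finset.sum_eq_zero
  intro d hd
  have hdeg : d.degree = 0 := by
    rw [Finsupp.degree_eq_weight_one]; exact h (mem_support_iff.mp hd)
  have : d = 0 := (Finsupp.degree_eq_zero_iff d).mp hdeg
  subst this
  simp

lemma foldl_pderiv_isHomogeneous {α : Type*} (g : α → Idx n) (l : List α)
    {F : MvPolynomial (Idx n) K} {f : ℕ} (h : F.IsHomogeneous f) :
    (l.foldl (fun F j => pderiv (g j) F) F).IsHomogeneous (f - l.length) := by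
  induction l generalizing F f with
  | nil => simpa using h
  | cons a l ih =>
    rw [List.foldl_cons]
    have := ih (pderiv_isHomogeneous h (g a))
    simpa [Nat.sub_sub, Nat.add_comm] using this

lemma foldl_pderiv_eq_zero {α : Type*} (g : α → Idx n) (l : List α)
    {F : MvPolynomial (Idx n) K} {f : ℕ} (h : F.IsHomogeneous f) (hl : f < l.length) :
    l.foldl (fun F j => pderiv (g j) F) F = 0 := by
  induction l generalizing F f with
  | nil => simp at hl
  | cons a l ih =>
    rw [List.foldl_cons]
    rcases Nat.eq_zero_or_pos f with rfl | hf
    · rw [pderiv_homog_zero h]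
      exact foldl_pderiv_zero g l
    · exact ih (pderiv_isHomogeneous h (g a)) (by simp at hl; omega)

lemma evalz_homog {F : MvPolynomial (Idx n) K} {f : ℕ} (h : F.IsHomogeneous f) (hf : f ≠ 0) :
    eval (fun _ : Idx n => (0 : K)) F = 0 := by
  have h1 : eval (fun _ : Idx n => (0 : K)) F = constantCoeff F := by rw [eval_zero']
  rw [h1, constantCoeff_eq]
  apply h.coeff_eq_zero
  simpa using (Ne.symm hf)

end Helpers
section Helpers2
set_option linter.unusedSectionVars false
variable {K : Type*} [Field K] [CharZero K] {n : ℕ}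

lemma evalz_derivsL {F : MvPolynomial (Idx n) K} {f : ℕ} (hF : F.IsHomogeneous f)
    {k : ℕ} (v : Fin k → Fin n × Bool) (hk : k ≠ f) :
    eval (fun _ : Idx n => (0 : K)) (derivsL v F) = 0 := by
  rw [derivsL]
  rcases lt_or_gt_of_ne hk with h | h
  · exact evalz_homog (foldl_pderiv_isHomogeneous _ _ hF) (by simp; omega)
  · rw [foldl_pderiv_eq_zero _ _ hF (by simpa using h)]
    simp

lemma evalz_derivsR {G : MvPolynomial (Idx n) K} {g : ℕ} (hG : G.IsHomogeneous g)
    {k : ℕ} (v : Fin k → Fin n × Bool) (hk : k ≠ g) :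
    eval (fun _ : Idx n => (0 : K)) (derivsR v G) = 0 := by
  rw [derivsR]
  rcases lt_or_gt_of_ne hk with h | h
  · exact evalz_homog (foldl_pderiv_isHomogeneous _ _ hG) (by simp; omega)
  · rw [foldl_pderiv_eq_zero _ _ hG (by simpa using h)]
    simp

lemma evalz_moyalC {F G : MvPolynomial (Idx n) K} {f g : ℕ} (hF : F.IsHomogeneous f)
    (hG : G.IsHomogeneous g) (k : ℕ) (hk : k ≠ f ∨ k ≠ g) :
    eval (fun _ : Idx n => (0 : K)) (moyalC k F G) = 0 := by
  rw [moyalC, smul_eq_C_mul, map_mul, eval_C]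
  rw [map_sum]
  rw [Finset.sum_eq_zero, mul_zero]
  intro v _
  rw [smul_eq_C_mul, map_mul, eval_C, map_mul]
  rcases hk with h | h
  · rw [evalz_derivsL hF v h]; ring
  · rw [evalz_derivsR hG v h]; ring

lemma moyalC_swap (k : ℕ) (F G : MvPolynomial (Idx n) K) :
    moyalC k G F = (-1 : K) ^ k • moyalC k F G := by
  rw [moyalC, moyalC, smul_comm]
  congr 1
  rw [Finset.smul_sum]
  apply Fintype.sum_bijective (fun v : Fin k → Fin n × Bool => fun j => ((v j).1, !(v j).2))
    (Function.Involutive.bijective (fun v => by funext j; simp))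
  intro v
  have hL : derivsL (fun j => ((v j).1, !(v j).2)) F = derivsR v F := by
    rw [derivsL, derivsR]
    congr 1
    funext P j
    cases h : (v j).2 <;> simp [h]
  have hR : derivsR (fun j => ((v j).1, !(v j).2)) G = derivsL v G := by
    rw [derivsL, derivsR]
    congr 1
    funext P j
    cases h : (v j).2 <;> simp [h]
  rw [hL, hR, smul_smul]
  have hs : (∏ j : Fin k, if (v j).2 then (1 : K) else -1)
      = (-1 : K) ^ k * ∏ j : Fin k, if (!(v j).2) then (1 : K) else -1 := by
    have hc : (-1 : K) ^ k = ∏ _j : Fin k, (-1 : K) := by simp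
    rw [hc, ← Finset.prod_mul_distrib]
    apply Finset.prod_congr rfl
    intro j _
    cases h : (v j).2 <;> simp [h]
  rw [hs, mul_comm (derivsL v G) (derivsR v F)]

lemma moyalC_zero_left (k : ℕ) (G : MvPolynomial (Idx n) K) : moyalC k 0 G = 0 := by
  have h : ∀ v : Fin k → Fin n × Bool, derivsL v (0 : MvPolynomial (Idx n) K) = 0 :=
    fun v => foldl_pderiv_zero _ _
  simp [moyalC, h]

lemma moyalC_zero_right (k : ℕ) (F : MvPolynomial (Idx n) K) : moyalC k F 0 = 0 := by
  have h : ∀ v : Fin k → Fin n × Bool, derivsR v (0 : MvPolynomial (Idx n) K) = 0 :=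
    fun v => foldl_pderiv_zero _ _
  simp [moyalC, h]

lemma mstar_zero_left (G : MvPolynomial (Idx n) K) : mstar 0 G = 0 := by
  simp [mstar, moyalC_zero_left]

lemma mstar_zero_right (F : MvPolynomial (Idx n) K) : mstar F 0 = 0 := by
  simp [mstar, moyalC_zero_right]

end Helpers2
section Helpers3
set_option linter.unusedSectionVars false
variable {K : Type*} [Field K] [CharZero K] {n : ℕ}

lemma evalz_bracket {F G : MvPolynomial (Idx n) K} {f g : ℕ}
    (hF : F.IsHomogeneous f) (hG : G.IsHomogeneous g) :
    eval (fun _ : Idx n => (0 : K)) (mstar F G - ((-1 : K) ^ (f * g)) • mstar G F) = 0 := by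
  rcases eq_or_ne F 0 with rfl | hF0
  · simp [mstar_zero_left, mstar_zero_right]
  rcases eq_or_ne G 0 with rfl | hG0
  · simp [mstar_zero_left, mstar_zero_right]
  have hdF : F.totalDegree = f := hF.totalDegree hF0
  have hdG : G.totalDegree = g := hG.totalDegree hG0
  rw [map_sub, smul_eq_C_mul, map_mul, eval_C, mstar, mstar, map_sum, map_sum, hdF, hdG]
  by_cases hfg : f = g
  · subst hfg
    rw [Finset.sum_eq_single f (fun k _ hk => evalz_moyalC hF hG k (Or.inl hk))
      (fun h => absurd (Finset.self_mem_range_succ f) h),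
      Finset.sum_eq_single f (fun k _ hk => evalz_moyalC hG hF k (Or.inl hk))
      (fun h => absurd (Finset.self_mem_range_succ f) h)]
    have hsw : eval (fun _ : Idx n => (0 : K)) (moyalC f G F)
        = (-1 : K) ^ f * eval (fun _ : Idx n => (0 : K)) (moyalC f F G) := by
      rw [moyalC_swap f F G, smul_eq_C_mul, map_mul, eval_C]
    rw [hsw]
    have h1 : ((-1 : K) ^ (f * f)) * (-1 : K) ^ f = 1 := by
      rw [← pow_add]
      apply Even.neg_one_pow
      have : f * f + f = f * (f + 1) := by ring
      rw [this]
      exact Nat.even_mul_succ_self f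
    set t := eval (fun _ : Idx n => (0 : K)) (moyalC f F G)
    calc t - (-1 : K) ^ (f * f) * ((-1 : K) ^ f * t)
        = t - ((-1 : K) ^ (f * f) * (-1 : K) ^ f) * t := by ring
      _ = 0 := by rw [h1]; ring
  · rw [Finset.sum_eq_zero (fun k _ => evalz_moyalC hF hG k (by omega)),
      Finset.sum_eq_zero (fun k _ => evalz_moyalC hG hF k (by omega))]
    ring

lemma moyalC_zero' (F G : MvPolynomial (Idx n) K) : moyalC 0 F G = F * G := by
  rw [moyalC]
  rw [Fintype.sum_unique]
  simp [derivsL, derivsR]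

lemma moyalC_one (F G : MvPolynomial (Idx n) K) :
    moyalC 1 F G = (2 : K)⁻¹ • poisson F G := by
  rw [moyalC]
  rw [Fintype.sum_equiv (Equiv.funUnique (Fin 1) (Fin n × Bool))
    _ (fun p => (if p.2 then (1 : K) else -1) •
        (pderiv (if p.2 then Sum.inl p.1 else Sum.inr p.1) F *
          pderiv (if p.2 then Sum.inr p.1 else Sum.inl p.1) G))
    (fun v => by
      have h1 : (∏ j : Fin 1, if (v j).2 then (1 : K) else -1)
          = (if (v 0).2 then (1 : K) else -1) := Fin.prod_univ_one _
      have hdl : derivsL v F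
          = pderiv (if (v 0).2 then Sum.inl (v 0).1 else Sum.inr (v 0).1) F := by
        rw [derivsL, List.finRange_succ]; simp
      have hdr : derivsR v G
          = pderiv (if (v 0).2 then Sum.inr (v 0).1 else Sum.inl (v 0).1) G := by
        rw [derivsR, List.finRange_succ]; simp
      rw [h1, hdl, hdr]
      rfl)]
  rw [Fintype.sum_prod_type]
  have hb : ∀ i : Fin n,
      (∑ b : Bool, (if b then (1 : K) else -1) •
        (pderiv (if b then Sum.inl i else Sum.inr i) F *
          pderiv (if b then Sum.inr i else Sum.inl i) G))
        = pderiv (Sum.inl i) F * pderiv (Sum.inr i) G -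
            pderiv (Sum.inr i) F * pderiv (Sum.inl i) G := by
    intro i
    rw [Fintype.sum_bool]
    simp [sub_eq_add_neg]
  have h2 : ((2 ^ 1 * Nat.factorial 1 : ℕ) : K) = 2 := by norm_num [Nat.factorial]
  rw [Finset.sum_congr rfl (fun i _ => hb i), ← poisson, h2]

end Helpers3
section Helpers4
set_option linter.unusedSectionVars false
variable {K : Type*} [Field K] [CharZero K] {n : ℕ}

lemma moyalC_X_right {k : ℕ} (hk : 2 ≤ k) (F : MvPolynomial (Idx n) K) (s : Idx n) :
    moyalC k F (X s) = 0 := by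
  have h : ∀ v : Fin k → Fin n × Bool, derivsR v (X s : MvPolynomial (Idx n) K) = 0 := by
    intro v
    rw [derivsR]
    exact foldl_pderiv_eq_zero _ _ (isHomogeneous_X K s) (by simp; omega)
  simp [moyalC, h]

lemma poisson_homog_zero {F : MvPolynomial (Idx n) K} (h : F.IsHomogeneous 0)
    (G : MvPolynomial (Idx n) K) : poisson F G = 0 := by
  rw [poisson]
  apply Finset.sum_eq_zero
  intro i _
  rw [pderiv_homog_zero h, pderiv_homog_zero h]
  ring

lemma mstar_X_right (F : MvPolynomial (Idx n) K) (s : Idx n) :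
    mstar F (X s) = F * X s + (2 : K)⁻¹ • poisson F (X s) := by
  rcases Nat.eq_zero_or_pos F.totalDegree with h0 | h1
  · rw [mstar, h0, Finset.range_one, Finset.sum_singleton, moyalC_zero',
      poisson_homog_zero ((totalDegree_zero_iff_isHomogeneous (p := F)).mp h0)]
    simp
  · rw [mstar, ← Finset.sum_subset (Finset.range_subset_range.mpr (by omega : 2 ≤ F.totalDegree + 1))
      (fun k _ hk => moyalC_X_right (by simp at hk; omega) F s)]
    rw [Finset.sum_range_succ, Finset.sum_range_one, moyalC_zero', moyalC_one]

lemma poisson_antisymm (F G : MvPolynomial (Idx n) K) : poisson G F = -poisson F G := by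
  rw [poisson, poisson, ← Finset.sum_neg_distrib]
  exact Finset.sum_congr rfl fun i _ => by ring

lemma mstar_X_left (F : MvPolynomial (Idx n) K) (s : Idx n) :
    mstar (X s) F = X s * F - (2 : K)⁻¹ • poisson F (X s) := by
  rw [mstar, totalDegree_X, Finset.sum_range_succ, Finset.sum_range_one, moyalC_zero',
    moyalC_one, poisson_antisymm F (X s), smul_neg, sub_eq_add_neg]

lemma poisson_X_inr (F : MvPolynomial (Idx n) K) (i : Fin n) :
    poisson F (X (Sum.inr i)) = pderiv (Sum.inl i) F := by
  rw [poisson, Finset.sum_eq_single i]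
  · simp
  · intro j _ hj
    have h1 : (Sum.inr i : Idx n) ≠ Sum.inr j := by simp [Ne.symm hj]
    have h2 : (Sum.inr i : Idx n) ≠ Sum.inl j := by simp
    rw [pderiv_X_of_ne h1, pderiv_X_of_ne h2]
    ring
  · simp

lemma poisson_X_inl (F : MvPolynomial (Idx n) K) (i : Fin n) :
    poisson F (X (Sum.inl i)) = -pderiv (Sum.inr i) F := by
  rw [poisson, Finset.sum_eq_single i]
  · simp
  · intro j _ hj
    have h1 : (Sum.inl i : Idx n) ≠ Sum.inl j := by simp [Ne.symm hj]
    have h2 : (Sum.inl i : Idx n) ≠ Sum.inr j := by simp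
    rw [pderiv_X_of_ne h1, pderiv_X_of_ne h2]
    ring
  · simp

lemma bracket_even {F : MvPolynomial (Idx n) K} {f : ℕ} (hf : Even f) (s : Idx n) :
    mstar F (X s) - ((-1 : K) ^ (f * 1)) • mstar (X s) F = poisson F (X s) := by
  rw [mul_one, hf.neg_one_pow, one_smul, mstar_X_right, mstar_X_left, mul_comm (X s) F]
  have h2 : (2 : K)⁻¹ • poisson F (X s) + (2 : K)⁻¹ • poisson F (X s) = poisson F (X s) := by
    rw [← add_smul]
    norm_num
  have h3 : F * X s + (2 : K)⁻¹ • poisson F (X s) -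
      (F * X s - (2 : K)⁻¹ • poisson F (X s))
      = (2 : K)⁻¹ • poisson F (X s) + (2 : K)⁻¹ • poisson F (X s) := by
    abel
  rw [h3]
  exact h2

lemma bracket_odd {F : MvPolynomial (Idx n) K} {f : ℕ} (hf : Odd f) (s : Idx n) :
    mstar F (X s) - ((-1 : K) ^ (f * 1)) • mstar (X s) F = (2 : K) • (F * X s) := by
  rw [mul_one, hf.neg_one_pow, neg_smul, one_smul, sub_neg_eq_add, mstar_X_right, mstar_X_left,
    mul_comm (X s) F]
  have : (2 : K) • (F * X s) = F * X s + F * X s := by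
    rw [two_smul]
  rw [this]
  abel

end Helpers4
section Helpers5
set_option linter.unusedSectionVars false
variable {K : Type*} [Field K] [CharZero K] {n : ℕ}

lemma monomial_mem_span (d : Idx n →₀ ℕ) (hd : d ≠ 0) :
    (monomial d (1 : K)) ∈ Submodule.span K (superBrackets n K) := by
  obtain ⟨s, hs⟩ : ∃ s, d s ≠ 0 := by
    by_contra h
    push_neg at h
    exact hd (Finsupp.ext h)
  rcases Nat.even_or_odd d.degree with he | ho
  · have hdeg0 : d.degree ≠ 0 := fun h => hd ((Finsupp.degree_eq_zero_iff d).mp h)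
    have hle : Finsupp.single s 1 ≤ d :=
      Finsupp.single_le_iff.mpr (Nat.one_le_iff_ne_zero.mpr hs)
    have hca : d - Finsupp.single s 1 + Finsupp.single s 1 = d := tsub_add_cancel_of_le hle
    set e := d - Finsupp.single s 1 with he'
    have hdeg : e.degree = d.degree - 1 := by
      have h2 := degree_add' e (Finsupp.single s 1)
      rw [hca, degree_single'] at h2
      omega
    have hodd : Odd (d.degree - 1) := Nat.Even.sub_odd (by omega) he odd_one
    have hF : (monomial e (1 : K)).IsHomogeneous (d.degree - 1) := isHomogeneous_monomial _ hdeg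
    have hb := bracket_odd (F := monomial e (1 : K)) hodd s
    have hmul : monomial e (1 : K) * X s = monomial d (1 : K) := by
      rw [X, monomial_mul, mul_one, hca]
    rw [hmul] at hb
    have hmem : (2 : K) • monomial d (1 : K) ∈ Submodule.span K (superBrackets n K) := by
      rw [← hb]
      exact Submodule.subset_span ⟨_, _, _, _, hF, isHomogeneous_X K s, rfl⟩
    have h4 := Submodule.smul_mem _ ((2 : K)⁻¹) hmem
    rwa [smul_smul, inv_mul_cancel₀ (two_ne_zero), one_smul] at h4
  · have heven : Even (d.degree + 1) := Odd.add_one ho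
    cases s with
    | inl i =>
      set c : K := ((d (Sum.inl i) + 1 : ℕ) : K)⁻¹ with hc
      set e := d + Finsupp.single (Sum.inl i) 1 with he'
      have hdeg : e.degree = d.degree + 1 := by rw [he', degree_add', degree_single']
      have hF : (monomial e c).IsHomogeneous (d.degree + 1) := isHomogeneous_monomial _ hdeg
      have hb := bracket_even (F := monomial e c) heven (Sum.inr i)
      rw [poisson_X_inr, pderiv_monomial] at hb
      have h2 : e - Finsupp.single (Sum.inl i) 1 = d := by
        rw [he']; exact add_tsub_cancel_right _ _
      have he2 : e (Sum.inl i) = d (Sum.inl i) + 1 := by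
        rw [he']; simp
      rw [h2, he2] at hb
      have h3 : c * ((d (Sum.inl i) + 1 : ℕ) : K) = 1 := by
        rw [hc]
        exact inv_mul_cancel₀ (Nat.cast_ne_zero.mpr (by omega))
      rw [h3] at hb
      exact Submodule.subset_span ⟨_, _, _, _, hF, isHomogeneous_X K _, hb.symm⟩
    | inr i =>
      set c : K := ((d (Sum.inr i) + 1 : ℕ) : K)⁻¹ with hc
      set e := d + Finsupp.single (Sum.inr i) 1 with he'
      have hdeg : e.degree = d.degree + 1 := by rw [he', degree_add', degree_single']
      have hF : (monomial e c).IsHomogeneous (d.degree + 1) := isHomogeneous_monomial _ hdeg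
      have hb := bracket_even (F := monomial e c) heven (Sum.inl i)
      rw [poisson_X_inl, pderiv_monomial] at hb
      have h2 : e - Finsupp.single (Sum.inr i) 1 = d := by
        rw [he']; exact add_tsub_cancel_right _ _
      have he2 : e (Sum.inr i) = d (Sum.inr i) + 1 := by
        rw [he']; simp
      rw [h2, he2] at hb
      have h3 : c * ((d (Sum.inr i) + 1 : ℕ) : K) = 1 := by
        rw [hc]
        exact inv_mul_cancel₀ (Nat.cast_ne_zero.mpr (by omega))
      rw [h3] at hb
      have hmem : -(monomial d (1 : K)) ∈ Submodule.span K (superBrackets n K) := by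
        rw [← hb]
        exact Submodule.subset_span ⟨_, _, _, _, hF, isHomogeneous_X K _, rfl⟩
      simpa using Submodule.neg_mem _ hmem

end Helpers5
/-- `[W,W] = ker(Str)` (the polynomials vanishing at `0`) and `W = K ⊕ [W,W]`. -/
theorem stmt14 :
    Submodule.span K (superBrackets n K) =
      LinearMap.ker (MvPolynomial.aeval (fun _ : Idx n => (0 : K))).toLinearMap ∧
    Submodule.span K {(1 : MvPolynomial (Idx n) K)} ⊓
      Submodule.span K (superBrackets n K) = ⊥ ∧
    Submodule.span K {(1 : MvPolynomial (Idx n) K)} ⊔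
      Submodule.span K (superBrackets n K) = ⊤ := by
  have hker : ∀ F : MvPolynomial (Idx n) K,
      F ∈ LinearMap.ker (MvPolynomial.aeval (fun _ : Idx n => (0 : K))).toLinearMap ↔
        eval (fun _ : Idx n => (0 : K)) F = 0 := by
    intro F
    rw [LinearMap.mem_ker, AlgHom.toLinearMap_apply]
    have h1 : (aeval (fun _ : Idx n => (0 : K))) F = eval (fun _ : Idx n => (0 : K)) F := by
      rw [aeval_def, eval]
      rfl
    rw [h1]
  have hspan : Submodule.span K (superBrackets n K) =
      LinearMap.ker (MvPolynomial.aeval (fun _ : Idx n => (0 : K))).toLinearMap := by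
    apply le_antisymm
    · rw [Submodule.span_le]
      rintro H ⟨F, G, f, g, hF, hG, rfl⟩
      rw [SetLike.mem_coe, hker]
      exact evalz_bracket hF hG
    · intro F hF
      rw [hker] at hF
      have h0 : coeff 0 F = 0 := by
        have h2 : eval (fun _ : Idx n => (0 : K)) F = constantCoeff F := by rw [eval_zero']
        rw [h2, constantCoeff_eq] at hF
        exact hF
      rw [F.as_sum]
      apply Submodule.sum_mem
      intro d hd
      have hd0 : d ≠ 0 := by rintro rfl; exact (mem_support_iff.mp hd) h0
      have h3 : monomial d (coeff d F) = (coeff d F) • monomial d (1 : K) := by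
        rw [smul_monomial, smul_eq_mul, mul_one]
      rw [h3]
      exact Submodule.smul_mem _ _ (monomial_mem_span d hd0)
  refine ⟨hspan, ?_, ?_⟩
  · rw [hspan, eq_bot_iff]
    rintro x hx
    rw [Submodule.mem_inf] at hx
    obtain ⟨hx1, hx2⟩ := hx
    obtain ⟨c, rfl⟩ := Submodule.mem_span_singleton.mp hx1
    rw [hker] at hx2
    rw [smul_eq_C_mul, mul_one, eval_C] at hx2
    simp [hx2]
  · rw [eq_top_iff]
    intro F _
    rw [Submodule.mem_sup]
    refine ⟨(eval (fun _ : Idx n => (0 : K)) F) • 1,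
      Submodule.mem_span_singleton.mpr ⟨_, rfl⟩,
      F - (eval (fun _ : Idx n => (0 : K)) F) • 1, ?_, by abel⟩
    rw [hspan, hker]
    rw [map_sub, smul_eq_C_mul, mul_one, eval_C]
    ring

end
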